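/- arXiv:1611.06261 — 2 statements merged into one kernel-verified Lean document; each statement's English description precedes it below -/
import Mathlib

section
/- Let (X, ℝ, α) be a one-parameter C*-dynamical system, let (e_λ)_{λ∈Λ} be an approximate identity of X, let δ > 0, and let f : ℝ → ℂ be integrable with f ≥ 0, ∫ f(t) dt = 1, and with f̂ supported in (−δ, δ). Then the elements d_λ = α_f(e_λ) = ∫ f(t)·α_t(e_λ) dt satisfy ‖d_λ‖ ≤ 1 and d_λ ∈ X^α((−δ, δ)) for every λ, and (d_λ)_{λ∈Λ} is again an approximate identity of X, i.e., ‖x d_λ − x‖ → 0 and ‖d_λ x − x‖ → 0 for every x ∈ X. -/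
/-!
Writing `y_t = α_{-t}(x)`, one has `x α_f(e_λ) - x = ∫ f(t) α_t(y_t e_λ - y_t) dt`. The integrand
is bounded by `2‖x‖ |f(t)|`, and it tends to `0` uniformly for `t` in a compact set `K`: the maps
`y ↦ y e_λ` are `1`-Lipschitz, so they converge to the identity uniformly on the compact orbit
piece `{y_t : t ∈ K}`. Since `|f|` has small mass outside a large compact set, this gives the
convergence along the net. The same computation with the reversed product handles `α_f(e_λ) x`,
and `‖α_f(e_λ)‖ ≤ ∫ |f| = 1` because *-automorphisms of a C*-algebra are contractive.
-/

open MeasureTheory Set Filter Topology Pointwise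

noncomputable section

namespace PeligradMax

variable {X : Type*} [NonUnitalNormedRing X] [StarRing X] [CStarRing X]
  [NormedSpace ℂ X] [IsScalarTower ℂ X X] [SMulCommClass ℂ X X] [StarModule ℂ X]
  [CompleteSpace X] [PartialOrder X] [StarOrderedRing X]

/-- A one-parameter C*-dynamical system: a group of *-automorphisms of `X`
with norm-continuous orbit maps. -/
structure IsCStarDynSys (α : ℝ → X → X) : Prop where
  map_zero_time : ∀ x, α 0 x = x
  map_add_time : ∀ s t x, α (s + t) x = α s (α t x)
  map_add : ∀ t x y, α t (x + y) = α t x + α t y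
  map_smulc : ∀ (t : ℝ) (c : ℂ) (x : X), α t (c • x) = c • α t x
  map_mul : ∀ t x y, α t (x * y) = α t x * α t y
  map_star : ∀ t x, α t (star x) = star (α t x)
  continuous_orbit : ∀ x, Continuous fun t => α t x

/-- Closed linear span. -/
def ClosedSpan (S : Set X) : Set X := closure ((Submodule.span ℂ S : Submodule ℂ X) : Set X)

def MulSet2 (S T : Set X) : Set X := {z | ∃ s ∈ S, ∃ t ∈ T, z = s * t}

def MulSet3 (S T R : Set X) : Set X := {z | ∃ s ∈ S, ∃ t ∈ T, ∃ r ∈ R, z = s * t * r}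

/-- Fourier transform of an integrable function. -/
def fourierT (f : ℝ → ℂ) (γ : ℝ) : ℂ := ∫ t : ℝ, f t * Complex.exp (-(Complex.I * γ * t))

/-- `α_f(x) = ∫ f(t) α_t(x) dt`. -/
def smear (α : ℝ → X → X) (f : ℝ → ℂ) (x : X) : X := ∫ t : ℝ, f t • α t x

/-- Arveson spectrum of an element. -/
def elemSpec (α : ℝ → X → X) (x : X) : Set ℝ :=
  {γ | ∀ f : ℝ → ℂ, Integrable f → smear α f x = 0 → fourierT f γ = 0}

/-- Spectral subspace associated with a closed set `F ⊆ ℝ`. -/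
def specC (α : ℝ → X → X) (F : Set ℝ) : Set X := {x | elemSpec α x ⊆ F}

/-- Spectral subspace of the subset `S` associated with an open set `U ⊆ ℝ`. -/
def specO (α : ℝ → X → X) (S : Set X) (U : Set ℝ) : Set X :=
  ClosedSpan {y | ∃ x ∈ S, ∃ f : ℝ → ℂ, Integrable f ∧
    IsCompact (tsupport (fourierT f)) ∧ tsupport (fourierT f) ⊆ U ∧ y = smear α f x}

/-- The fixed point algebra `X^α`. -/
def fixedPts (α : ℝ → X → X) : Set X := {x | ∀ t, α t x = x}

/-- The Arveson spectrum of the action restricted to `S`. -/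
def actSpec (α : ℝ → X → X) (S : Set X) : Set ℝ :=
  {γ : ℝ | ∀ ε > (0 : ℝ), S ∩ specC α (Icc (γ - ε) (γ + ε)) ≠ ({0} : Set X)}

def Invariant (α : ℝ → X → X) (S : Set X) : Prop := ∀ t : ℝ, ∀ x ∈ S, α t x ∈ S

def IsSubalgebra (B : Set X) : Prop :=
  (0 : X) ∈ B ∧ (∀ x ∈ B, ∀ y ∈ B, x + y ∈ B) ∧
  (∀ c : ℂ, ∀ x ∈ B, c • x ∈ B) ∧ ∀ x ∈ B, ∀ y ∈ B, x * y ∈ B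

def IsStarSubalgebra (B : Set X) : Prop := IsSubalgebra B ∧ ∀ x ∈ B, star x ∈ B

/-- `B` is a hereditary C*-subalgebra of the subset `S`. -/
def IsHereditaryIn (S B : Set X) : Prop :=
  B ⊆ S ∧ IsClosed B ∧ IsStarSubalgebra B ∧
  ∀ x ∈ S, ∀ b ∈ B, 0 ≤ x → x ≤ b → x ∈ B

/-- `K` is a norm-closed two-sided ideal of the subset `S`. -/
def IsClosedTwoSidedIdealIn (S K : Set X) : Prop :=
  K ⊆ S ∧ IsClosed K ∧ (0 : X) ∈ K ∧ (∀ x ∈ K, ∀ y ∈ K, x + y ∈ K) ∧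
  (∀ c : ℂ, ∀ x ∈ K, c • x ∈ K) ∧ ∀ s ∈ S, ∀ k ∈ K, s * k ∈ K ∧ k * s ∈ K

/-- `S` is `α`-simple: no nontrivial norm-closed `α`-invariant two-sided ideals. -/
def AlphaSimple (α : ℝ → X → X) (S : Set X) : Prop :=
  ∀ K : Set X, IsClosedTwoSidedIdealIn S K → Invariant α K → K = ({0} : Set X) ∨ K = S

/-- The strong Arveson spectrum of the action restricted to `B`. -/
def strongSpec (α : ℝ → X → X) (B : Set X) : Set ℝ :=
  {γ : ℝ | ∀ ε > (0 : ℝ),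
    ClosedSpan (MulSet3 (star '' (B ∩ specC α (Icc (γ - ε) (γ + ε)))) B
      (B ∩ specC α (Icc (γ - ε) (γ + ε)))) = B}

/-- The strong Connes spectrum of the action restricted to `S`. -/
def ConnesSpec (α : ℝ → X → X) (S : Set X) : Set ℝ :=
  ⋂ B ∈ {B : Set X | IsHereditaryIn S B ∧ B ≠ ({0} : Set X) ∧ Invariant α B},
    strongSpec α B

def IsMaximalClosedSubalgebra (B : Set X) : Prop :=
  IsClosed B ∧ IsSubalgebra B ∧ B ≠ (univ : Set X) ∧
  ∀ W : Set X, IsClosed W → IsSubalgebra W → B ⊆ W → W = B ∨ W = univ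

/-- The spectral Condition 4.3. -/
def Condition43 (α : ℝ → X → X) : Prop :=
  (∃ γ₀ : ℝ, 0 < γ₀ ∧ actSpec α (univ : Set X) = ({-γ₀, 0, γ₀} : Set ℝ) ∧
    IsClosedTwoSidedIdealIn (fixedPts α)
      (ClosedSpan (MulSet2 (specC α ({γ₀} : Set ℝ)) (star '' specC α ({γ₀} : Set ℝ)))) ∧
    ∀ K : Set X,
      IsClosedTwoSidedIdealIn
        (ClosedSpan (MulSet2 (specC α ({γ₀} : Set ℝ)) (star '' specC α ({γ₀} : Set ℝ)))) K →
      K = ({0} : Set X) ∨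
        K = ClosedSpan (MulSet2 (specC α ({γ₀} : Set ℝ)) (star '' specC α ({γ₀} : Set ℝ)))) ∨
  (∃ Y : Set X, IsClosedTwoSidedIdealIn (univ : Set X) Y ∧ Invariant α Y ∧ AlphaSimple α Y ∧
    specO α Y (Ioi (0 : ℝ)) = specO α (univ : Set X) (Ioi (0 : ℝ)) ∧
    actSpec α Y = ConnesSpec α Y ∧
    closure (Y + specC α (Ici (0 : ℝ))) = (univ : Set X))

open scoped NNReal

theorem tendstoUniformlyOn_of_lipschitzWith {ι Y Z : Type*} [PseudoMetricSpace Y]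
    [PseudoMetricSpace Z] {l : Filter ι} {F : ι → Y → Z} {K : ℝ≥0}
    (hF : ∀ i, LipschitzWith K (F i)) {g : Y → Z} (hFg : ∀ y, Tendsto (F · y) l (𝓝 (g y)))
    {S : Set Y} (hS : IsCompact S) : TendstoUniformlyOn F g l S := by
  have hequi := (LipschitzWith.uniformEquicontinuous F K hF).equicontinuous
  have h := (EquicontinuousOn.tendsto_uniformOnFun_iff_pi (𝔖 := {S | IsCompact S})
    (fun _ hK => hK) (sUnion_eq_univ_iff.2 fun y => ⟨{y}, isCompact_singleton, rfl⟩)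
    (fun _ _ => hequi.equicontinuousOn _) l g).2 (tendsto_pi_nhds.2 hFg)
  exact UniformOnFun.tendsto_iff_tendstoUniformlyOn.1 h S hS

theorem _root_.MeasureTheory.Integrable.exists_isCompact_norm_setIntegral_compl_lt {S E : Type*}
    [TopologicalSpace S] [SigmaCompactSpace S] [T2Space S] [MeasurableSpace S]
    [OpensMeasurableSpace S] {μ : Measure S} [NormedAddCommGroup E] [NormedSpace ℝ E] {f : S → E}
    (hf : Integrable f μ) {ε : ℝ} (hε : 0 < ε) :
    ∃ K, IsCompact K ∧ ‖∫ x in Kᶜ, f x ∂μ‖ < ε := by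
  have hanti : Antitone fun n => (compactCovering S n)ᶜ :=
    fun _ _ h => compl_subset_compl.2 (compactCovering_subset S h)
  have htail := tendsto_setIntegral_of_antitone
    (fun n => (isCompact_compactCovering S n).measurableSet.compl) hanti ⟨0, hf.integrableOn⟩
  rw [← compl_iUnion, iUnion_compactCovering, compl_univ, Measure.restrict_empty,
    integral_zero_measure] at htail
  obtain ⟨n, hn⟩ := (tendsto_norm_zero.comp htail |>.eventually (gt_mem_nhds hε)).exists
  exact ⟨_, isCompact_compactCovering S n, hn⟩

/-- The small mass of `‖f‖` outside a large compact set replaces the countability of the filter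
that the usual dominated convergence theorem needs. -/
theorem tendsto_integral_smul_of_tendstoUniformlyOn_isCompact {S 𝕜 E ι : Type*}
    [TopologicalSpace S] [SigmaCompactSpace S] [T2Space S] [MeasurableSpace S]
    [OpensMeasurableSpace S] {μ : Measure S} [NormedField 𝕜] [NormedAddCommGroup E]
    [NormedSpace 𝕜 E] [NormedSpace ℝ E] {l : Filter ι} {f : S → 𝕜} (hf : Integrable f μ)
    {G : ι → S → E} {C : ℝ≥0} (hG_meas : ∀ i, AEStronglyMeasurable (G i) μ)
    (hG_bound : ∀ i x, ‖G i x‖ ≤ C) (hG : ∀ K, IsCompact K → TendstoUniformlyOn G 0 l K) :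
    Tendsto (fun i => ∫ x, f x • G i x ∂μ) l (𝓝 0) := by
  set A := ∫ x, ‖f x‖ ∂μ
  have hbound_int : ∀ i, Integrable (fun x => ‖f x‖ * ‖G i x‖) μ := fun i =>
    hf.norm.mul_bdd (hG_meas i).norm (.of_forall fun x => by simpa using hG_bound i x)
  suffices h : ∀ c > 0, ∀ᶠ i in l, ‖∫ x, f x • G i x ∂μ‖ ≤ c * ‖A + C + 1‖ from
    (Asymptotics.isLittleO_const_iff (by positivity)).1 (Asymptotics.isLittleO_iff.2 h)
  intro c hc
  obtain ⟨K, hK, hK_tail⟩ := hf.norm.exists_isCompact_norm_setIntegral_compl_lt hc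
  filter_upwards [Metric.tendstoUniformlyOn_iff.1 (hG K hK) c hc] with i hi
  have h_in : ∫ x in K, ‖f x‖ * ‖G i x‖ ∂μ ≤ c * A := calc
    _ ≤ ∫ x in K, ‖f x‖ * c ∂μ := setIntegral_mono_on (hbound_int i).integrableOn
          (hf.norm.mul_const c).integrableOn hK.measurableSet fun x hx => by
            gcongr; simpa using (hi x hx).le
    _ ≤ ∫ x, ‖f x‖ * c ∂μ := setIntegral_le_integral (hf.norm.mul_const c)
          (.of_forall fun x => by positivity)
    _ = c * A := by rw [integral_mul_const, mul_comm]
  have h_out : ∫ x in Kᶜ, ‖f x‖ * ‖G i x‖ ∂μ ≤ c * C := calc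
    _ ≤ ∫ x in Kᶜ, ‖f x‖ * C ∂μ := setIntegral_mono_on (hbound_int i).integrableOn
          (hf.norm.mul_const _).integrableOn hK.measurableSet.compl fun x _ => by
            gcongr; exact hG_bound i x
    _ ≤ c * C := by
        rw [integral_mul_const]
        gcongr
        exact (Real.le_norm_self (∫ x in Kᶜ, ‖f x‖ ∂μ)).trans hK_tail.le
  calc ‖∫ x, f x • G i x ∂μ‖ ≤ ∫ x, ‖f x‖ * ‖G i x‖ ∂μ := by
        simpa only [norm_smul] using norm_integral_le_integral_norm (fun x => f x • G i x)
    _ = ∫ x in K, ‖f x‖ * ‖G i x‖ ∂μ + ∫ x in Kᶜ, ‖f x‖ * ‖G i x‖ ∂μ :=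
        (integral_add_compl hK.measurableSet (hbound_int i)).symm
    _ ≤ c * ‖A + C + 1‖ := by
        rw [Real.norm_of_nonneg (by positivity)]
        nlinarith

theorem integral_norm_eq_re_integral {S : Type*} [MeasurableSpace S] {μ : Measure S}
    {f : S → ℂ} (hf : Integrable f μ) (hf_nonneg : ∀ t, ∃ r : ℝ, 0 ≤ r ∧ f t = r) :
    ∫ t, ‖f t‖ ∂μ = (∫ t, f t ∂μ).re := by
  rw [← RCLike.re_to_complex, ← integral_re hf]
  refine integral_congr_ae (.of_forall fun t => ?_)
  obtain ⟨r, hr, hfr⟩ := hf_nonneg t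
  simp [hfr, abs_of_nonneg hr]

section Dynamics

variable {A : Type*} [NonUnitalNormedRing A] [NormedSpace ℂ A] {α : ℝ → A → A}

theorem norm_smear_le {f : ℝ → ℂ} (hf : Integrable f) (hα_norm : ∀ t x, ‖α t x‖ ≤ ‖x‖)
    (x : A) : ‖smear α f x‖ ≤ (∫ t, ‖f t‖) * ‖x‖ := by
  rw [← integral_mul_const]
  refine norm_integral_le_of_norm_le (hf.norm.mul_const _) (.of_forall fun t => ?_)
  rw [norm_smul]
  gcongr
  exact hα_norm t x

theorem smear_mem_specO {f : ℝ → ℂ} (hf : Integrable f) {U : Set ℝ}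
    (hU : Bornology.IsBounded U) (hfU : tsupport (fourierT f) ⊆ U) {S : Set A} {x : A}
    (hx : x ∈ S) : smear α f x ∈ specO α S U :=
  subset_closure <| Submodule.subset_span
    ⟨x, hx, f, hf, Metric.isCompact_of_isClosed_isBounded (isClosed_tsupport _) (hU.subset hfU),
      hfU, rfl⟩

variable [StarRing A]

namespace IsCStarDynSys

def toNonUnitalStarAlgHom (hα : IsCStarDynSys α) (t : ℝ) : A →⋆ₙₐ[ℂ] A where
  toFun := α t
  map_smul' := hα.map_smulc t
  map_zero' := by simpa using hα.map_smulc t 0 0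
  map_add' := hα.map_add t
  map_mul' := hα.map_mul t
  map_star' := hα.map_star t

theorem map_sub (hα : IsCStarDynSys α) (t : ℝ) (x y : A) : α t (x - y) = α t x - α t y :=
  _root_.map_sub (hα.toNonUnitalStarAlgHom t) x y

theorem apply_apply_neg (hα : IsCStarDynSys α) (t : ℝ) (x : A) : α t (α (-t) x) = x := by
  rw [← hα.map_add_time, add_neg_cancel, hα.map_zero_time]

theorem norm_apply_le [CStarRing A] [IsScalarTower ℂ A A] [SMulCommClass ℂ A A]
    [StarModule ℂ A] [CompleteSpace A] (hα : IsCStarDynSys α) (t : ℝ) (x : A) :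
    ‖α t x‖ ≤ ‖x‖ :=
  letI : NonUnitalCStarAlgebra A := {}
  NonUnitalStarAlgHom.norm_apply_le (hα.toNonUnitalStarAlgHom t) x

end IsCStarDynSys

theorem tendsto_apply_smear [CompleteSpace A] (hα : IsCStarDynSys α)
    (hα_norm : ∀ t x, ‖α t x‖ ≤ ‖x‖) (B : A →L[ℂ] A →L[ℂ] A)
    (hB_norm : ∀ x y, ‖B x y‖ ≤ ‖x‖ * ‖y‖) (hBα : ∀ t x y, α t (B x y) = B (α t x) (α t y))
    {ι : Type*} {l : Filter ι} {e : ι → A} (he_norm : ∀ i, ‖e i‖ ≤ 1)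
    (he : ∀ x, Tendsto (fun i => B x (e i)) l (𝓝 x)) {f : ℝ → ℂ} (hf : Integrable f)
    (hf_one : ∫ t, f t = 1) (x : A) :
    Tendsto (fun i => B x (smear α f (e i))) l (𝓝 x) := by
  set G : ι → ℝ → A := fun i t => B x (α t (e i)) - x
  have hG_eq : ∀ i t, G i t = α t (B (α (-t) x) (e i) - α (-t) x) := fun i t => by
    rw [hα.map_sub, hBα, hα.apply_apply_neg]
  have hsmear : ∀ i, B x (smear α f (e i)) - x = ∫ t, f t • G i t := fun i => by
    have hint : Integrable (fun t => f t • α t (e i)) :=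
      hf.smul_bdd ‖e i‖ (hα.continuous_orbit _).aestronglyMeasurable
        (.of_forall fun t => hα_norm t _)
    simp only [G, smul_sub]
    rw [integral_sub (by simpa using (B x).integrable_comp hint) (hf.smul_const x),
      integral_smul_const, hf_one, one_smul, smear, ← (B x).integral_comp_comm hint]
    simp only [map_smul]
  have hG_meas : ∀ i, AEStronglyMeasurable (G i) := fun i =>
    (((B x).continuous.comp (hα.continuous_orbit _)).sub continuous_const).aestronglyMeasurable
  have hG_bound : ∀ i t, ‖G i t‖ ≤ (2 * ‖x‖₊ : ℝ≥0) := fun i t => calc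
    ‖G i t‖ ≤ ‖x‖ * ‖α t (e i)‖ + ‖x‖ := (norm_sub_le _ _).trans (by gcongr; exact hB_norm _ _)
    _ ≤ ‖x‖ * 1 + ‖x‖ := by gcongr; exact (hα_norm t _).trans (he_norm i)
    _ = _ := by push_cast; ring
  have hG_unif : ∀ K, IsCompact K → TendstoUniformlyOn G 0 l K := by
    intro K hK
    have hB_lip : ∀ i, LipschitzWith 1 fun y => B y (e i) := fun i =>
      LipschitzWith.of_dist_le_mul fun y z => by
        rw [dist_eq_norm, dist_eq_norm, NNReal.coe_one, one_mul, ← sub_apply, ← map_sub]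
        exact (hB_norm _ _).trans (mul_le_of_le_one_right (norm_nonneg _) (he_norm i))
    have hunif := tendstoUniformlyOn_of_lipschitzWith hB_lip he
      (hK.image ((hα.continuous_orbit x).comp continuous_neg))
    rw [Metric.tendstoUniformlyOn_iff] at hunif ⊢
    intro ε hε
    filter_upwards [hunif ε hε] with i hi t ht
    rw [Pi.zero_apply, dist_zero_left, hG_eq]
    refine (hα_norm _ _).trans_lt ?_
    rw [← dist_eq_norm, dist_comm]
    exact hi _ (mem_image_of_mem _ ht)
  rw [← tendsto_sub_nhds_zero_iff]
  simpa only [hsmear] using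
    tendsto_integral_smul_of_tendstoUniformlyOn_isCompact hf hG_meas hG_bound hG_unif

end Dynamics

theorem smeared_approximate_identity_general (α : ℝ → X → X) (hα : IsCStarDynSys α)
    {Λ : Type*} [Preorder Λ]
    (e : Λ → X) (he_norm : ∀ l, ‖e l‖ ≤ 1)
    (he_right : ∀ x : X, Tendsto (fun l => ‖x * e l - x‖) atTop (𝓝 0))
    (he_left : ∀ x : X, Tendsto (fun l => ‖e l * x - x‖) atTop (𝓝 0))
    (δ : ℝ)
    (f : ℝ → ℂ) (hf_int : Integrable f)
    (hf_nonneg : ∀ t : ℝ, ∃ r : ℝ, 0 ≤ r ∧ f t = (r : ℂ))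
    (hf_one : (∫ t : ℝ, f t) = 1)
    (hf_supp : tsupport (fourierT f) ⊆ Ioo (-δ) δ) :
    (∀ l, ‖smear α f (e l)‖ ≤ 1 ∧
      smear α f (e l) ∈ specO α (univ : Set X) (Ioo (-δ) δ)) ∧
    (∀ x : X, Tendsto (fun l => ‖x * smear α f (e l) - x‖) atTop (𝓝 0)) ∧
    (∀ x : X, Tendsto (fun l => ‖smear α f (e l) * x - x‖) atTop (𝓝 0)) := by
  have hα_norm := hα.norm_apply_le
  have hf_norm : ∫ t, ‖f t‖ = 1 := by
    rw [integral_norm_eq_re_integral hf_int hf_nonneg, hf_one, Complex.one_re]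
  refine ⟨fun l => ⟨?_, ?_⟩, fun x => ?_, fun x => ?_⟩
  · calc ‖smear α f (e l)‖ ≤ (∫ t, ‖f t‖) * ‖e l‖ := norm_smear_le hf_int hα_norm _
      _ ≤ 1 := by rw [hf_norm, one_mul]; exact he_norm l
  · exact smear_mem_specO hf_int (Metric.isBounded_Ioo _ _) hf_supp (mem_univ _)
  · exact tendsto_iff_norm_sub_tendsto_zero.1 <| tendsto_apply_smear hα hα_norm
      (ContinuousLinearMap.mul ℂ X) norm_mul_le hα.map_mul he_norm
      (fun y => tendsto_iff_norm_sub_tendsto_zero.2 (he_right y)) hf_int hf_one x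
  · exact tendsto_iff_norm_sub_tendsto_zero.1 <| tendsto_apply_smear hα hα_norm
      (ContinuousLinearMap.mul ℂ X).flip (fun y z => (norm_mul_le z y).trans_eq (mul_comm _ _))
      (fun t y z => hα.map_mul t z y) he_norm
      (fun y => tendsto_iff_norm_sub_tendsto_zero.2 (he_left y)) hf_int hf_one x

/-- **Remark 4.2 v).** Smearing an approximate identity of `X` with a nonnegative integrable
function `f` of integral one whose Fourier transform is supported in `(−δ, δ)` yields an
approximate identity of `X` consisting of elements of `X^α((−δ, δ))` of norm at most one. -/
theorem smeared_approximate_identity (α : ℝ → X → X) (hα : IsCStarDynSys α)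
    {Λ : Type*} [Preorder Λ] [IsDirected Λ (· ≤ ·)] [Nonempty Λ]
    (e : Λ → X) (he_pos : ∀ l, 0 ≤ e l) (he_norm : ∀ l, ‖e l‖ ≤ 1)
    (he_right : ∀ x : X, Tendsto (fun l => ‖x * e l - x‖) atTop (𝓝 0))
    (he_left : ∀ x : X, Tendsto (fun l => ‖e l * x - x‖) atTop (𝓝 0))
    (δ : ℝ) (hδ : 0 < δ)
    (f : ℝ → ℂ) (hf_int : Integrable f)
    (hf_nonneg : ∀ t : ℝ, ∃ r : ℝ, 0 ≤ r ∧ f t = (r : ℂ))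
    (hf_one : (∫ t : ℝ, f t) = 1)
    (hf_supp : tsupport (fourierT f) ⊆ Ioo (-δ) δ) :
    (∀ l, ‖smear α f (e l)‖ ≤ 1 ∧
      smear α f (e l) ∈ specO α (univ : Set X) (Ioo (-δ) δ)) ∧
    (∀ x : X, Tendsto (fun l => ‖x * smear α f (e l) - x‖) atTop (𝓝 0)) ∧
    (∀ x : X, Tendsto (fun l => ‖smear α f (e l) * x - x‖) atTop (𝓝 0)) :=
  smeared_approximate_identity_general α hα e he_norm he_right he_left δ f hf_int hf_nonneg hf_one
    hf_supp

end PeligradMax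
end
end

section
/- Let (X, ℝ, α) be a periodic one-parameter C*-dynamical system with X_n ≠ {0} for some n ≠ 0, and suppose Condition (S) holds. Then either there exists an integer m > 0 such that {n ∈ ℤ : X_n ≠ {0}} = {−m, 0, m} and the closed linear span of {x y* : x, y ∈ X_m} is a two-sided ideal of X_0 having no norm-closed two-sided ideals other than {0} and itself, or there exists an integer m > 0 such that {n ∈ ℤ : X_n ≠ {0}} = mℤ. -/
open MeasureTheory Set Filter Topology Pointwise

noncomputable section

namespace PeligradMax

variable {X : Type*} [NonUnitalNormedRing X] [StarRing X] [CStarRing X]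
  [NormedSpace ℂ X] [IsScalarTower ℂ X X] [SMulCommClass ℂ X X] [StarModule ℂ X]
  [CompleteSpace X] [PartialOrder X] [StarOrderedRing X]

/-- The spectral subspace `X_n` of a periodic system with period `2π/γ₁`. -/
def specZ (α : ℝ → X → X) (γ₁ : ℝ) (n : ℤ) : Set X :=
  {x | ∀ t : ℝ, α t x = Complex.exp (Complex.I * (((n : ℝ) * γ₁ * t : ℝ) : ℂ)) • x}

/-- Condition (S) for a periodic system. -/
def ConditionS (α : ℝ → X → X) (γ₁ : ℝ) : Prop :=
  ∃ J : Set X, IsClosedTwoSidedIdealIn (specZ α γ₁ 0) J ∧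
    (∀ K : Set X, IsClosedTwoSidedIdealIn J K → K = ({0} : Set X) ∨ K = J) ∧
    ∀ n : ℤ, 0 < n → specZ α γ₁ n ≠ ({0} : Set X) →
      ClosedSpan {z : X | ∃ x ∈ specZ α γ₁ n, ∃ y ∈ specZ α γ₁ n, z = x * star y} = J

end PeligradMax

/-!
Let `N = {n | X_n ≠ 0}`. Since `X_n* = X_{-n}` and `X_a X_b ⊆ X_{a+b}`, `N = -N`. By Condition (S)
all `X_n X_n*` with `0 < n ∈ N` span the same ideal `J`, and in a C*-algebra `x x* x = 0` forces
`x = 0`; together these give two rules for positive `a, b`: if `a, b ∈ N` then `a - b ∈ N`, and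
if `a, b, a + b ∈ N` then `2a + b ∈ N`. Let `m` be the least positive element of `N`. Either
`N = {-m, 0, m}`, or by the first rule the least element of `N` above `m` is `2m`; then the second
rule climbs from `m, 2m` to all of `mℤ`, and the first one, through Euclidean division, excludes
everything else.
-/

theorem CStarRing.eq_zero_of_mul_star_mul_self {E : Type*} [NonUnitalNormedRing E] [StarRing E]
    [CStarRing E] {x : E} (h : x * star x * x = 0) : x = 0 := by
  rw [← CStarRing.mul_star_self_eq_zero_iff, ← CStarRing.mul_star_self_eq_zero_iff (x * star x),
    star_mul, star_star, ← mul_assoc, h, zero_mul]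

namespace Int

variable {S : Set ℤ} {m : ℤ}

theorem mul_mem_of_add_mem (neg_mem : ∀ n ∈ S, -n ∈ S)
    (add_mem : ∀ a ∈ S, ∀ b ∈ S, a + b ∈ S → 0 < a → 0 < b → 2 * a + b ∈ S)
    (zero_mem : 0 ∈ S) (hm : 0 < m) (hmS : m ∈ S) (two_mul_mem : 2 * m ∈ S) (k : ℤ) :
    m * k ∈ S := by
  have succ_mul_mem : ∀ q : ℕ, m * (q + 1) ∈ S ∧ m * (q + 2) ∈ S := by
    intro q
    induction q with
    | zero => simpa [mul_comm m 2] using ⟨hmS, two_mul_mem⟩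
    | succ q ih =>
      refine ⟨by simpa [add_assoc] using ih.2, ?_⟩
      have := add_mem m hmS (m * (q + 1)) ih.1 (by convert ih.2 using 1; ring) hm
        (by positivity)
      convert this using 1
      push_cast
      ring
  have nat_mul_mem : ∀ q : ℕ, m * q ∈ S := by
    rintro (_ | q)
    · simpa using zero_mem
    · simpa using (succ_mul_mem q).1
  obtain ⟨q, rfl | rfl⟩ := k.eq_nat_or_neg
  · exact nat_mul_mem q
  · simpa using neg_mem _ (nat_mul_mem q)

theorem dvd_of_mem_of_mul_mem (sub_mem : ∀ a ∈ S, ∀ b ∈ S, 0 < a → 0 < b → a - b ∈ S)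
    (hmin : ∀ n ∈ S, 0 < n → m ≤ n) (hm : 0 < m) (mul_mem : ∀ k, m * k ∈ S) {n : ℤ}
    (hn : n ∈ S) (hn0 : 0 < n) : m ∣ n := by
  -- otherwise the remainder `n % m = n - m * (n / m)` is a smaller positive element of `S`
  by_contra hndvd
  have hdiv := Int.mul_ediv_add_emod n m
  have hrm := Int.emod_lt_of_pos n hm
  have hr : 0 < n % m :=
    lt_of_le_of_ne (Int.emod_nonneg n hm.ne') (Ne.symm (mt Int.dvd_of_emod_eq_zero hndvd))
  have hq : 0 < m * (n / m) := by nlinarith [hmin n hn hn0]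
  have := hmin _ (sub_mem n hn _ (mul_mem (n / m)) hn0 hq) (by linarith)
  linarith

theorem eq_triple_or_eq_range_mul (neg_mem : ∀ n ∈ S, -n ∈ S)
    (sub_mem : ∀ a ∈ S, ∀ b ∈ S, 0 < a → 0 < b → a - b ∈ S)
    (add_mem : ∀ a ∈ S, ∀ b ∈ S, a + b ∈ S → 0 < a → 0 < b → 2 * a + b ∈ S)
    (hS : ∃ n ≠ 0, n ∈ S) :
    (∃ m : ℤ, 0 < m ∧ S = {-m, 0, m}) ∨ ∃ m : ℤ, 0 < m ∧ S = Set.range (m * ·) := by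
  have abs_mem : ∀ n ∈ S, |n| ∈ S := fun n hn => by
    rcases abs_choice n with h | h <;> rw [h]
    exacts [hn, neg_mem n hn]
  obtain ⟨m, ⟨hmS, hm⟩, hmin⟩ : ∃ m, (m ∈ S ∧ 0 < m) ∧ ∀ n, n ∈ S ∧ 0 < n → m ≤ n := by
    obtain ⟨n, hn, hnS⟩ := hS
    exact Int.exists_least_of_bdd ⟨0, fun _ h => h.2.le⟩ ⟨|n|, abs_mem n hnS, abs_pos.2 hn⟩
  have zero_mem : (0 : ℤ) ∈ S := by simpa using sub_mem m hmS m hmS hm hm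
  by_cases hbig : ∃ n ∈ S, m < n
  · -- the least element of `S` above `m` is `2 * m`
    have two_mul_mem : 2 * m ∈ S := by
      obtain ⟨n, ⟨hnS, hmn⟩, hnmin⟩ : ∃ n, (n ∈ S ∧ m < n) ∧ ∀ k, k ∈ S ∧ m < k → n ≤ k :=
        Int.exists_least_of_bdd ⟨m, fun _ h => h.2.le⟩ (by simpa using hbig)
      have hsub := sub_mem n hnS m hmS (hm.trans hmn) hm
      have := hmin (n - m) ⟨hsub, by omega⟩
      have : ¬ m < n - m := fun h => by have := hnmin (n - m) ⟨hsub, h⟩; omega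
      rwa [show 2 * m = n by omega]
    have mul_mem := mul_mem_of_add_mem neg_mem add_mem zero_mem hm hmS two_mul_mem
    refine Or.inr ⟨m, hm, Set.ext fun n => ⟨fun hn => ?_, by rintro ⟨k, rfl⟩; exact mul_mem k⟩⟩
    rcases eq_or_ne n 0 with rfl | hn0
    · exact ⟨0, mul_zero m⟩
    obtain ⟨k, hk⟩ := (dvd_abs m n).1 <| dvd_of_mem_of_mul_mem sub_mem
      (fun n hn hn0 => hmin n ⟨hn, hn0⟩) hm mul_mem (abs_mem n hn) (abs_pos.2 hn0)
    exact ⟨k, hk.symm⟩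
  · push Not at hbig
    refine Or.inl ⟨m, hm, Set.ext fun n => ⟨fun hn => ?_, ?_⟩⟩
    · rcases eq_or_ne n 0 with rfl | hn0
      · simp
      have hle := hmin |n| ⟨abs_mem n hn, abs_pos.2 hn0⟩
      rcases (abs_eq hm.le).1 (le_antisymm (hbig |n| (abs_mem n hn)) hle) with rfl | rfl <;> simp
    · rintro (rfl | rfl | rfl)
      exacts [neg_mem m hmS, zero_mem, hmS]

end Int

namespace PeligradMax

section

variable {X : Type*} [NonUnitalNormedRing X] [NormedSpace ℂ X]

lemma mul_eq_zero_of_mem_closedSpan_left [SMulCommClass ℂ X X] {S : Set X} {x j : X}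
    (h : ∀ s ∈ S, x * s = 0) (hj : j ∈ ClosedSpan S) : x * j = 0 :=
  closure_minimal (Submodule.span_le (p := LinearMap.ker (LinearMap.mulLeft ℂ x)).2 h)
    (isClosed_eq (continuous_const.mul continuous_id) continuous_const) hj

lemma mul_eq_zero_of_mem_closedSpan_right [IsScalarTower ℂ X X] {S : Set X} {y j : X}
    (h : ∀ s ∈ S, s * y = 0) (hj : j ∈ ClosedSpan S) : j * y = 0 :=
  closure_minimal (Submodule.span_le (p := LinearMap.ker (LinearMap.mulRight ℂ y)).2 h)
    (isClosed_eq (continuous_id.mul continuous_const) continuous_const) hj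

variable [StarRing X]

def mulStarSpan (S : Set X) : Set X := ClosedSpan {z | ∃ x ∈ S, ∃ y ∈ S, z = x * star y}

lemma mul_star_mem_mulStarSpan {S : Set X} {x y : X} (hx : x ∈ S) (hy : y ∈ S) :
    x * star y ∈ mulStarSpan S :=
  subset_closure (Submodule.subset_span ⟨x, hx, y, hy, rfl⟩)

variable {α : ℝ → X → X} {γ₁ : ℝ}

lemma zero_mem_specZ (hα : IsCStarDynSys α) (n : ℤ) : (0 : X) ∈ specZ α γ₁ n := fun t => by
  simpa using hα.map_smulc t 0 0

lemma specZ_eq_zero_iff (hα : IsCStarDynSys α) {n : ℤ} :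
    specZ α γ₁ n = {0} ↔ ∀ x ∈ specZ α γ₁ n, x = 0 :=
  Set.eq_singleton_iff_unique_mem.trans (and_iff_right (zero_mem_specZ hα n))

lemma mul_mem_specZ [IsScalarTower ℂ X X] [SMulCommClass ℂ X X] (hα : IsCStarDynSys α)
    {a b : ℤ} {x y : X} (hx : x ∈ specZ α γ₁ a) (hy : y ∈ specZ α γ₁ b) :
    x * y ∈ specZ α γ₁ (a + b) := fun t => by
  rw [hα.map_mul, hx t, hy t, smul_mul_smul_comm, ← Complex.exp_add]
  push_cast
  ring_nf

lemma star_mem_specZ [StarModule ℂ X] (hα : IsCStarDynSys α) {a : ℤ} {x : X}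
    (hx : x ∈ specZ α γ₁ a) :
    star x ∈ specZ α γ₁ (-a) := fun t => by
  rw [hα.map_star, hx t, star_smul, Complex.star_def, ← Complex.exp_conj]
  simp only [map_mul, Complex.conj_I, Complex.conj_ofReal]
  push_cast
  ring_nf

lemma specZ_eq_zero_of_neg [StarModule ℂ X] (hα : IsCStarDynSys α) {n : ℤ}
    (h : specZ α γ₁ (-n) = {0}) : specZ α γ₁ n = {0} := by
  rw [specZ_eq_zero_iff hα] at h ⊢
  exact fun x hx => star_eq_zero.1 (h _ (star_mem_specZ hα hx))

variable [CStarRing X] [IsScalarTower ℂ X X] [SMulCommClass ℂ X X] [StarModule ℂ X]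

lemma specZ_eq_zero_of_sub (hα : IsCStarDynSys α) {J : Set X} {a b : ℤ}
    (ha : mulStarSpan (specZ α γ₁ a) = J) (hb : mulStarSpan (specZ α γ₁ b) = J)
    (h : specZ α γ₁ (a - b) = {0}) : specZ α γ₁ a = {0} := by
  rw [specZ_eq_zero_iff hα] at h ⊢
  intro x hx
  -- `x x* ∈ J`, while `J x = 0` because `X_b* x ⊆ X_{a-b} = 0`
  have hJx : ∀ j ∈ J, j * x = 0 := by
    rw [← hb]
    refine fun j => mul_eq_zero_of_mem_closedSpan_right ?_
    rintro _ ⟨u, -, v, hv, rfl⟩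
    have hvx := mul_mem_specZ hα (star_mem_specZ hα hv) hx
    rw [neg_add_eq_sub] at hvx
    rw [mul_assoc, h _ hvx, mul_zero]
  exact CStarRing.eq_zero_of_mul_star_mul_self (hJx _ (ha ▸ mul_star_mem_mulStarSpan hx hx))

lemma specZ_eq_zero_of_two_mul_add (hα : IsCStarDynSys α) {J : Set X} {a b : ℤ}
    (ha : mulStarSpan (specZ α γ₁ a) = J) (hb : mulStarSpan (specZ α γ₁ b) = J)
    (hab : mulStarSpan (specZ α γ₁ (a + b)) = J) (h : specZ α γ₁ (2 * a + b) = {0}) :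
    specZ α γ₁ (a + b) = {0} := by
  rw [specZ_eq_zero_iff hα] at h ⊢
  -- `X_a X_{a+b} ⊆ X_{2a+b} = 0` gives `X_a J = 0`, hence `X_a X_b = 0` as `y y* ∈ J` for `y ∈ X_b`
  have hxJ : ∀ x ∈ specZ α γ₁ a, ∀ j ∈ J, x * j = 0 := by
    intro x hx
    rw [← hab]
    refine fun j => mul_eq_zero_of_mem_closedSpan_left ?_
    rintro _ ⟨u, hu, v, -, rfl⟩
    have hxu := mul_mem_specZ hα hx hu
    rw [← add_assoc, ← two_mul] at hxu
    rw [← mul_assoc, h _ hxu, zero_mul]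
  have hxy : ∀ x ∈ specZ α γ₁ a, ∀ y ∈ specZ α γ₁ b, x * y = 0 := by
    intro x hx y hy
    rw [← CStarRing.mul_star_self_eq_zero_iff, star_mul, ← mul_assoc, mul_assoc x y,
      hxJ x hx _ (hb ▸ mul_star_mem_mulStarSpan hy hy), zero_mul]
  -- then `z z* ∈ J` for `z ∈ X_{a+b}`, while `J z = 0` because `X_a X_a* z ⊆ X_a X_b = 0`
  intro z hz
  have hJz : ∀ j ∈ J, j * z = 0 := by
    rw [← ha]
    refine fun j => mul_eq_zero_of_mem_closedSpan_right ?_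
    rintro _ ⟨u, hu, v, hv, rfl⟩
    have hvz := mul_mem_specZ hα (star_mem_specZ hα hv) hz
    rw [neg_add_cancel_left] at hvz
    rw [mul_assoc, hxy u hu _ hvz]
  exact CStarRing.eq_zero_of_mul_star_mul_self (hJz _ (hab ▸ mul_star_mem_mulStarSpan hz hz))

end

variable {X : Type*} [NonUnitalNormedRing X] [StarRing X] [CStarRing X]
  [NormedSpace ℂ X] [IsScalarTower ℂ X X] [SMulCommClass ℂ X X] [StarModule ℂ X]
  [CompleteSpace X] [PartialOrder X] [StarOrderedRing X]

theorem conditionS_spectrum_structure_general (α : ℝ → X → X) (hα : IsCStarDynSys α) (γ₁ : ℝ)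
    (hnontrivial : ∃ n : ℤ, n ≠ 0 ∧ specZ α γ₁ n ≠ ({0} : Set X))
    (hS : ConditionS α γ₁) :
    (∃ m : ℤ, 0 < m ∧ {n : ℤ | specZ α γ₁ n ≠ ({0} : Set X)} = ({-m, 0, m} : Set ℤ) ∧
      IsClosedTwoSidedIdealIn (specZ α γ₁ 0)
        (ClosedSpan {z : X | ∃ x ∈ specZ α γ₁ m, ∃ y ∈ specZ α γ₁ m, z = x * star y}) ∧
      ∀ K : Set X,
        IsClosedTwoSidedIdealIn
          (ClosedSpan {z : X | ∃ x ∈ specZ α γ₁ m, ∃ y ∈ specZ α γ₁ m, z = x * star y}) K →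
        K = ({0} : Set X) ∨
          K = ClosedSpan {z : X | ∃ x ∈ specZ α γ₁ m, ∃ y ∈ specZ α γ₁ m, z = x * star y}) ∨
    (∃ m : ℤ, 0 < m ∧ {n : ℤ | specZ α γ₁ n ≠ ({0} : Set X)} =
      Set.range (fun k : ℤ => m * k)) := by
  obtain ⟨J, hJideal, hJsimple, hJspan⟩ := hS
  set S : Set ℤ := {n | specZ α γ₁ n ≠ {0}}
  have hJ : ∀ n ∈ S, 0 < n → mulStarSpan (specZ α γ₁ n) = J := fun n hn hn0 => hJspan n hn0 hn
  have neg_mem : ∀ n ∈ S, -n ∈ S := fun n hn => mt (specZ_eq_zero_of_neg hα) hn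
  have sub_mem : ∀ a ∈ S, ∀ b ∈ S, 0 < a → 0 < b → a - b ∈ S := fun a ha b hb ha0 hb0 =>
    mt (specZ_eq_zero_of_sub hα (hJ a ha ha0) (hJ b hb hb0)) ha
  have add_mem : ∀ a ∈ S, ∀ b ∈ S, a + b ∈ S → 0 < a → 0 < b → 2 * a + b ∈ S :=
    fun a ha b hb hab ha0 hb0 => mt (specZ_eq_zero_of_two_mul_add hα (hJ a ha ha0)
      (hJ b hb hb0) (hJ _ hab (add_pos ha0 hb0))) hab
  rcases Int.eq_triple_or_eq_range_mul neg_mem sub_mem add_mem hnontrivial with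
    ⟨m, hm, hspec⟩ | hmultiples
  · have hJm := hJspan m hm (show m ∈ S by simp [hspec])
    exact Or.inl ⟨m, hm, hspec, hJm ▸ hJideal, hJm ▸ hJsimple⟩
  · exact Or.inr hmultiples

/-- **Lemma 4.4.** For a nontrivial periodic one-parameter C*-dynamical system satisfying
Condition (S), either the set of `n` with `X_n ≠ {0}` equals `{−m, 0, m}` for some `m > 0`
and the closed span of `X_m X_m*` is a simple ideal of `X_0`, or this set equals `mℤ` for
some `m > 0`. -/
theorem conditionS_spectrum_structure (α : ℝ → X → X) (hα : IsCStarDynSys α)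
    (γ₁ : ℝ) (hγ₁ : 0 < γ₁) (hper : ∀ x : X, α (2 * Real.pi / γ₁) x = x)
    (hnontrivial : ∃ n : ℤ, n ≠ 0 ∧ specZ α γ₁ n ≠ ({0} : Set X))
    (hS : ConditionS α γ₁) :
    (∃ m : ℤ, 0 < m ∧ {n : ℤ | specZ α γ₁ n ≠ ({0} : Set X)} = ({-m, 0, m} : Set ℤ) ∧
      IsClosedTwoSidedIdealIn (specZ α γ₁ 0)
        (ClosedSpan {z : X | ∃ x ∈ specZ α γ₁ m, ∃ y ∈ specZ α γ₁ m, z = x * star y}) ∧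
      ∀ K : Set X,
        IsClosedTwoSidedIdealIn
          (ClosedSpan {z : X | ∃ x ∈ specZ α γ₁ m, ∃ y ∈ specZ α γ₁ m, z = x * star y}) K →
        K = ({0} : Set X) ∨
          K = ClosedSpan {z : X | ∃ x ∈ specZ α γ₁ m, ∃ y ∈ specZ α γ₁ m, z = x * star y}) ∨
    (∃ m : ℤ, 0 < m ∧ {n : ℤ | specZ α γ₁ n ≠ ({0} : Set X)} =
      Set.range (fun k : ℤ => m * k)) :=
  conditionS_spectrum_structure_general α hα γ₁ hnontrivial hS

end PeligradMax
end
end
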